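/- arXiv:2506.17555 — 3 statements merged into one kernel-verified Lean document; each statement's English description precedes it below -/
import Mathlib

section
/- Let (X,T) be a topological dynamical system on a compact metric space, ℰ : M(X) → ℝ an energy, ε > 0, and 𝒰 a finite open cover of X with diam(𝒰) ≤ ε. Set τ_ε = sup { |ℰ(μ) − ℰ(ν)| : μ,ν ∈ M(X), W(μ,ν) ≤ ε }. If δ > 0 is a Lebesgue number of 𝒰, then for all n ≥ 1, e^{−n τ_ε} · p³_n(T,ℰ;𝒰) ≤ Q_n(T,ℰ,δ/2), where Q_n(T,ℰ,ρ) = inf { ∑_{x∈F} e^{nℰ(Δ_x^n)} : F is an (n,ρ)-spanning set of X }. -/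
open MeasureTheory Filter Set
open scoped ENNReal NNReal Classical

set_option linter.unusedSectionVars false

variable {X : Type*} [MetricSpace X] [CompactSpace X] [MeasurableSpace X] [BorelSpace X]

/-- The empirical measure `Δ_x^n = (1/n) ∑_{i<n} δ_{T^i x}` as a `Measure`. -/
noncomputable def empMeas (T : X → X) (n : ℕ) (x : X) : Measure X :=
  (n : ℝ≥0∞)⁻¹ • ∑ i ∈ Finset.range n, Measure.dirac (T^[i] x)

theorem empMeas_prob (T : X → X) {n : ℕ} (hn : n ≠ 0) (x : X) :
    IsProbabilityMeasure (empMeas T n x) := by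
  constructor
  simp only [empMeas, Measure.smul_apply, smul_eq_mul, Measure.finset_sum_apply,
    measure_univ, Finset.sum_const, Finset.card_range, nsmul_eq_mul, mul_one]
  exact ENNReal.inv_mul_cancel (by exact_mod_cast hn) (by simp)

/-- The empirical measure as a probability measure (junk value `δ_x` for `n = 0`). -/
noncomputable def empPM (T : X → X) (n : ℕ) (x : X) : ProbabilityMeasure X :=
  if hn : n = 0 then ⟨Measure.dirac x, inferInstance⟩
  else ⟨empMeas T n x, empMeas_prob T hn x⟩

/-- The weight `e^{n ℰ(Δ_x^n)}`. -/
noncomputable def wt (T : X → X) (ℰ : ProbabilityMeasure X → ℝ) (n : ℕ) (x : X) : ℝ :=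
  Real.exp (n * ℰ (empPM T n x))

/-- Kantorovich–Rubinstein (Wasserstein-1) distance. -/
noncomputable def Wass (μ ν : Measure X) : ℝ :=
  sSup {r | ∃ g : X → ℝ, LipschitzWith 1 g ∧ r = (∫ x, g x ∂μ) - ∫ x, g x ∂ν}

/-- The dynamical join `𝒰_0^{n-1} = ⋁_{i=0}^{n-1} T^{-i} 𝒰`. -/
noncomputable def joinF (T : X → X) (𝒰 : Finset (Set X)) (n : ℕ) : Finset (Set X) :=
  (Fintype.piFinset fun _ : Fin n => 𝒰).image fun u => ⋂ i : Fin n, T^[(i : ℕ)] ⁻¹' u i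

def IsBorelCover (𝒱 : Finset (Set X)) : Prop :=
  (∀ V ∈ 𝒱, MeasurableSet V) ∧ ⋃₀ (𝒱 : Set (Set X)) = univ

def IsOpenCover (𝒰 : Finset (Set X)) : Prop :=
  (∀ U ∈ 𝒰, IsOpen U) ∧ ⋃₀ (𝒰 : Set (Set X)) = univ

/-- `𝒱` refines `𝒲`: every element of `𝒱` is contained in some element of `𝒲`. -/
def Refines (𝒱 𝒲 : Finset (Set X)) : Prop := ∀ V ∈ 𝒱, ∃ W ∈ 𝒲, V ⊆ W

def IsPartitionF (α : Finset (Set X)) : Prop :=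
  (∀ A ∈ α, MeasurableSet A) ∧ ⋃₀ (α : Set (Set X)) = univ ∧
    ∀ A ∈ α, ∀ B ∈ α, A ≠ B → Disjoint A B

noncomputable def p1 (T : X → X) (ℰ : ProbabilityMeasure X → ℝ) (𝒰 : Finset (Set X)) (n : ℕ) : ℝ :=
  sInf {r | ∃ 𝒱 : Finset (Set X), IsBorelCover 𝒱 ∧ Refines 𝒱 (joinF T 𝒰 n) ∧
    r = ∑ V ∈ 𝒱, sSup (wt T ℰ n '' V)}

noncomputable def p2 (T : X → X) (ℰ : ProbabilityMeasure X → ℝ) (𝒰 : Finset (Set X)) (n : ℕ) : ℝ :=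
  sInf {r | ∃ 𝒱 : Finset (Set X), IsBorelCover 𝒱 ∧ Refines 𝒱 (joinF T 𝒰 n) ∧
    r = ∑ V ∈ 𝒱, sInf (wt T ℰ n '' V)}

noncomputable def p3 (T : X → X) (ℰ : ProbabilityMeasure X → ℝ) (𝒰 : Finset (Set X)) (n : ℕ) : ℝ :=
  sInf {r | ∃ β : Finset (Set X), β ⊆ joinF T 𝒰 n ∧ ⋃₀ (β : Set (Set X)) = univ ∧
    r = ∑ B ∈ β, sSup (wt T ℰ n '' B)}

noncomputable def p4 (T : X → X) (ℰ : ProbabilityMeasure X → ℝ) (𝒰 : Finset (Set X)) (n : ℕ) : ℝ :=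
  sInf {r | ∃ β : Finset (Set X), β ⊆ joinF T 𝒰 n ∧ ⋃₀ (β : Set (Set X)) = univ ∧
    r = ∑ B ∈ β, sInf (wt T ℰ n '' B)}

/-- `E` is an `(n,ε)`-separated set. -/
def IsSeparated (T : X → X) (n : ℕ) (ε : ℝ) (E : Finset X) : Prop :=
  ∀ x ∈ E, ∀ y ∈ E, x ≠ y → ∃ i < n, ε ≤ dist (T^[i] x) (T^[i] y)

/-- `F` is an `(n,ε)`-spanning set. -/
def IsSpanning (T : X → X) (n : ℕ) (ε : ℝ) (F : Finset X) : Prop :=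
  ∀ x : X, ∃ y ∈ F, ∀ i < n, dist (T^[i] x) (T^[i] y) < ε

noncomputable def Pn (T : X → X) (ℰ : ProbabilityMeasure X → ℝ) (n : ℕ) (ε : ℝ) : ℝ :=
  sSup {r | ∃ E : Finset X, IsSeparated T n ε E ∧ r = ∑ x ∈ E, wt T ℰ n x}

noncomputable def Qn (T : X → X) (ℰ : ProbabilityMeasure X → ℝ) (n : ℕ) (ε : ℝ) : ℝ :=
  sInf {r | ∃ F : Finset X, IsSpanning T n ε F ∧ r = ∑ x ∈ F, wt T ℰ n x}

/-- `τ_ε`, modulus of continuity of the energy w.r.t. the Wasserstein distance. -/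
noncomputable def tauE (ℰ : ProbabilityMeasure X → ℝ) (ε : ℝ) : ℝ :=
  sSup {r | ∃ μ ν : ProbabilityMeasure X, Wass (μ : Measure X) (ν : Measure X) ≤ ε ∧
    r = |ℰ μ - ℰ ν|}

/-- Shannon entropy of a finite collection of sets. -/
noncomputable def entF (μ : Measure X) (α : Finset (Set X)) : ℝ :=
  ∑ A ∈ α, Real.negMulLog (μ A).toReal

/-- `H_μ(𝒰)`: infimum of entropies of partitions refining `𝒰`. -/
noncomputable def Hcov (μ : Measure X) (𝒰 : Finset (Set X)) : ℝ :=
  sInf {r | ∃ α : Finset (Set X), IsPartitionF α ∧ Refines α 𝒰 ∧ r = entF μ α}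

/-- Local measure-theoretic entropy `h_μ(T,𝒰)`. -/
noncomputable def hcov (T : X → X) (μ : Measure X) (𝒰 : Finset (Set X)) : ℝ :=
  Filter.atTop.limsup fun n => Hcov μ (joinF T 𝒰 n) / n

/-! Choosing for every point a member of `𝒰` containing its `δ`-ball, the orbit of each point
`y` of an `(n, δ/2)`-spanning set selects a member of `𝒰_0^{n-1}` containing the `(n, δ)`-Bowen
ball of `y`, so these members cover `X`. Every point `x` of the member chosen for `y` has its
first `n` iterates `ε`-close to those of `y` because `diam 𝒰 ≤ ε`, hence `W(Δ_x^n, Δ_y^n) ≤ ε`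
and the weight of `x` is at most `e^{n τ_ε}` times that of `y`. The supremum `τ_ε` is finite
since `ℰ` is continuous on the compact space `M(X)`. -/

open Topology

lemma integral_empPM (T : X → X) {n : ℕ} (hn : n ≠ 0) {g : X → ℝ} (hg : Continuous g) (x : X) :
    ∫ z, g z ∂(empPM T n x : Measure X) = (n : ℝ)⁻¹ * ∑ i ∈ Finset.range n, g (T^[i] x) := by
  have hint : ∀ i ∈ Finset.range n, Integrable g (Measure.dirac (T^[i] x)) :=
    fun i _ => hg.integrable_of_hasCompactSupport (isClosed_tsupport g).isCompact
  simp only [empPM, hn, ↓reduceDIte, ProbabilityMeasure.coe_mk, empMeas]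
  rw [integral_smul_measure, integral_finsetSum_measure hint]
  simp [integral_dirac, ENNReal.toReal_inv, smul_eq_mul]

lemma wass_empPM_le (T : X → X) {n : ℕ} (hn : n ≠ 0) {ε : ℝ} {x y : X}
    (h : ∀ i < n, dist (T^[i] x) (T^[i] y) ≤ ε) :
    Wass (empPM T n x : Measure X) (empPM T n y : Measure X) ≤ ε := by
  refine csSup_le ⟨0, fun _ => 0, LipschitzWith.const' 0, by simp⟩ ?_
  rintro _ ⟨g, hg, rfl⟩
  rw [integral_empPM T hn hg.continuous, integral_empPM T hn hg.continuous, ← mul_sub,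
    ← Finset.sum_sub_distrib, inv_mul_le_iff₀ (by positivity)]
  calc ∑ i ∈ Finset.range n, (g (T^[i] x) - g (T^[i] y))
      ≤ ∑ _i ∈ Finset.range n, ε := Finset.sum_le_sum fun i hi =>
        calc g (T^[i] x) - g (T^[i] y) ≤ dist (g (T^[i] x)) (g (T^[i] y)) :=
              (le_abs_self _).trans (Real.dist_eq _ _).ge
          _ ≤ dist (T^[i] x) (T^[i] y) := by simpa using hg.dist_le_mul (T^[i] x) (T^[i] y)
          _ ≤ ε := h i (Finset.mem_range.mp hi)
    _ = n * ε := by simp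

lemma abs_sub_le_tauE {ℰ : ProbabilityMeasure X → ℝ} (hE : Continuous ℰ) {ε : ℝ}
    {μ ν : ProbabilityMeasure X} (h : Wass (μ : Measure X) (ν : Measure X) ≤ ε) :
    |ℰ μ - ℰ ν| ≤ tauE ℰ ε := by
  have hbdd : BddAbove (range fun p : ProbabilityMeasure X × ProbabilityMeasure X =>
      |ℰ p.1 - ℰ p.2|) := (isCompact_range (by fun_prop)).bddAbove
  refine le_csSup (hbdd.mono ?_) ⟨μ, ν, h, rfl⟩
  rintro _ ⟨μ, ν, -, rfl⟩
  exact ⟨(μ, ν), rfl⟩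

lemma wt_le_exp_mul_wt (T : X → X) {ℰ : ProbabilityMeasure X → ℝ} (hE : Continuous ℰ)
    {n : ℕ} (hn : n ≠ 0) {ε : ℝ} {x y : X} (h : ∀ i < n, dist (T^[i] x) (T^[i] y) ≤ ε) :
    wt T ℰ n x ≤ Real.exp (n * tauE ℰ ε) * wt T ℰ n y := by
  have hτ := (le_abs_self _).trans (abs_sub_le_tauE hE (wass_empPM_le T hn h))
  rw [wt, wt, ← Real.exp_add, Real.exp_le_exp, ← mul_add]
  gcongr
  linarith

lemma sSup_wt_nonneg (T : X → X) (ℰ : ProbabilityMeasure X → ℝ) (n : ℕ) (B : Set X) :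
    0 ≤ sSup (wt T ℰ n '' B) :=
  Real.sSup_nonneg (by rintro _ ⟨x, -, rfl⟩; exact (Real.exp_pos _).le)

lemma p3_le_sum {T : X → X} {ℰ : ProbabilityMeasure X → ℝ} {𝒰 : Finset (Set X)} {n : ℕ}
    {β : Finset (Set X)} (hβ : β ⊆ joinF T 𝒰 n) (hcov : ⋃₀ (β : Set (Set X)) = univ) :
    p3 T ℰ 𝒰 n ≤ ∑ B ∈ β, sSup (wt T ℰ n '' B) := by
  refine csInf_le ⟨0, ?_⟩ ⟨β, hβ, hcov, rfl⟩
  rintro _ ⟨β, -, -, rfl⟩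
  exact Finset.sum_nonneg fun B _ => sSup_wt_nonneg T ℰ n B

lemma IsSpanning.mono {T : X → X} {n : ℕ} {ρ ρ' : ℝ} {F : Finset X} (hF : IsSpanning T n ρ F)
    (hρ : ρ ≤ ρ') : IsSpanning T n ρ' F := fun x =>
  let ⟨y, hyF, hy⟩ := hF x
  ⟨y, hyF, fun i hi => (hy i hi).trans_le hρ⟩

lemma exists_isSpanning {T : X → X} (hT : Continuous T) (n : ℕ) {ρ : ℝ} (hρ : 0 < ρ) :
    ∃ F : Finset X, IsSpanning T n ρ F := by
  have hnhds : ∀ y : X, {x | ∀ i < n, dist (T^[i] x) (T^[i] y) < ρ} ∈ 𝓝 y := fun y =>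
    (Filter.eventually_all_finite (Set.finite_lt_nat n)).2 fun i _ =>
      (hT.iterate i).continuousAt.eventually (Metric.ball_mem_nhds _ hρ)
  obtain ⟨F, -, hF⟩ := isCompact_univ.elim_nhds_subcover _ fun y _ => hnhds y
  refine ⟨F, fun x => ?_⟩
  simpa using hF (mem_univ x)

def orbitCylinder (T : X → X) (U : X → Set X) (n : ℕ) (y : X) : Set X :=
  ⋂ i : Fin n, T^[(i : ℕ)] ⁻¹' U (T^[(i : ℕ)] y)

lemma orbitCylinder_mem_joinF {T : X → X} {𝒰 : Finset (Set X)} {U : X → Set X}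
    (hU : ∀ x, U x ∈ 𝒰) (n : ℕ) (y : X) : orbitCylinder T U n y ∈ joinF T 𝒰 n :=
  Finset.mem_image.2 ⟨fun i => U (T^[(i : ℕ)] y), Fintype.mem_piFinset.2 fun _ => hU _, rfl⟩

lemma mem_orbitCylinder_of_dist_lt {T : X → X} {U : X → Set X} {δ : ℝ}
    (hU : ∀ x, Metric.ball x δ ⊆ U x) {n : ℕ} {x y : X}
    (h : ∀ i < n, dist (T^[i] x) (T^[i] y) < δ) : x ∈ orbitCylinder T U n y :=
  mem_iInter.2 fun i => hU _ (h i i.2)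

lemma dist_le_of_mem_orbitCylinder {T : X → X} {U : X → Set X} {ε : ℝ}
    (hself : ∀ x, x ∈ U x) (hdiam : ∀ x, Metric.diam (U x) ≤ ε) {n : ℕ} {x y : X}
    (hx : x ∈ orbitCylinder T U n y) : ∀ i < n, dist (T^[i] x) (T^[i] y) ≤ ε := fun i hi => by
  have hxi : T^[i] x ∈ U (T^[i] y) := mem_iInter.1 hx ⟨i, hi⟩
  exact (Metric.dist_le_diam_of_mem Metric.isBounded_of_compactSpace hxi (hself _)).trans
    (hdiam _)

lemma p3_le_exp_mul_sum_of_isSpanning {T : X → X} {ℰ : ProbabilityMeasure X → ℝ}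
    (hE : Continuous ℰ) {n : ℕ} (hn : n ≠ 0) {ε δ : ℝ} {𝒰 : Finset (Set X)}
    (hdiam : ∀ U ∈ 𝒰, Metric.diam U ≤ ε) (hδ : 0 < δ)
    (hleb : ∀ x : X, ∃ U ∈ 𝒰, Metric.ball x δ ⊆ U) {F : Finset X}
    (hF : IsSpanning T n δ F) :
    p3 T ℰ 𝒰 n ≤ Real.exp (n * tauE ℰ ε) * ∑ y ∈ F, wt T ℰ n y := by
  choose U hU𝒰 hball using hleb
  have hcov : ⋃₀ ((F.image (orbitCylinder T U n) : Finset (Set X)) : Set (Set X)) = univ :=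
    eq_univ_of_forall fun x =>
      let ⟨y, hyF, hy⟩ := hF x
      ⟨_, Finset.mem_coe.2 (Finset.mem_image_of_mem _ hyF), mem_orbitCylinder_of_dist_lt hball hy⟩
  calc p3 T ℰ 𝒰 n ≤ ∑ B ∈ F.image (orbitCylinder T U n), sSup (wt T ℰ n '' B) :=
        p3_le_sum (Finset.image_subset_iff.2 fun y _ => orbitCylinder_mem_joinF hU𝒰 n y) hcov
    _ ≤ ∑ y ∈ F, sSup (wt T ℰ n '' orbitCylinder T U n y) :=
        Finset.sum_image_le_of_nonneg fun B _ => sSup_wt_nonneg T ℰ n B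
    _ ≤ ∑ y ∈ F, Real.exp (n * tauE ℰ ε) * wt T ℰ n y := by
        refine Finset.sum_le_sum fun y _ => Real.sSup_le ?_
          (mul_pos (Real.exp_pos _) (Real.exp_pos _)).le
        rintro _ ⟨x, hx, rfl⟩
        exact wt_le_exp_mul_wt T hE hn <| dist_le_of_mem_orbitCylinder
          (fun z => hball z (Metric.mem_ball_self hδ)) (fun z => hdiam _ (hU𝒰 z)) hx
    _ = Real.exp (n * tauE ℰ ε) * ∑ y ∈ F, wt T ℰ n y := (Finset.mul_sum ..).symm

theorem p3_le_Qn_general (T : X → X) (hT : Continuous T)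
    (ℰ : ProbabilityMeasure X → ℝ) (hE : Continuous ℰ)
    (ε : ℝ) (𝒰 : Finset (Set X))
    (hdiam : ∀ U ∈ 𝒰, Metric.diam U ≤ ε)
    (δ : ℝ) (hδ : 0 < δ) (hleb : ∀ x : X, ∃ U ∈ 𝒰, Metric.ball x δ ⊆ U)
    (n : ℕ) (hn : 1 ≤ n) :
    Real.exp (-(n * tauE ℰ ε)) * p3 T ℰ 𝒰 n ≤ Qn T ℰ n (δ / 2) := by
  obtain ⟨F₀, hF₀⟩ := exists_isSpanning hT n (half_pos hδ)
  refine le_csInf ⟨_, F₀, hF₀, rfl⟩ ?_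
  rintro _ ⟨F, hF, rfl⟩
  have hp3 := p3_le_exp_mul_sum_of_isSpanning hE (Nat.one_le_iff_ne_zero.1 hn) hdiam hδ hleb
    (hF.mono (half_le_self hδ.le))
  rwa [Real.exp_neg, inv_mul_le_iff₀ (Real.exp_pos _)]

/-- if `δ` is a Lebesgue number of `𝒰` and `diam 𝒰 ≤ ε`, then
`e^{-n τ_ε} · p³_n(T,ℰ;𝒰) ≤ Q_n(T,ℰ,δ/2)`. -/
theorem p3_le_Qn (T : X → X) (hT : Continuous T)
    (ℰ : ProbabilityMeasure X → ℝ) (hE : Continuous ℰ)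
    (ε : ℝ) (hε : 0 < ε) (𝒰 : Finset (Set X)) (h𝒰 : IsOpenCover 𝒰)
    (hdiam : ∀ U ∈ 𝒰, Metric.diam U ≤ ε)
    (δ : ℝ) (hδ : 0 < δ) (hleb : ∀ x : X, ∃ U ∈ 𝒰, Metric.ball x δ ⊆ U)
    (n : ℕ) (hn : 1 ≤ n) :
    Real.exp (-(n * tauE ℰ ε)) * p3 T ℰ 𝒰 n ≤ Qn T ℰ n (δ / 2) :=
  p3_le_Qn_general T hT ℰ hE ε 𝒰 hdiam δ hδ hleb n hn
end

section
/- Let (X,T) be a topological dynamical system, 𝒰 a finite open cover with Lebesgue number δ > 0, ℰ an energy, and n ≥ 1. Then there exist a finite (n,δ/2)-separated set E ⊆ X and a finite Borel cover 𝒱 of X refining 𝒰_0^{n-1}, with the elements of 𝒱 pairwise disjoint and in bijection with E, such that ∑_{V∈𝒱} sup_{x∈V} e^{nℰ(Δ_x^n)} = ∑_{x∈E} e^{nℰ(Δ_x^n)}. Consequently p¹_n(T,ℰ;𝒰) ≤ P_n(T,ℰ,δ/2). -/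
open MeasureTheory Filter Set
open scoped ENNReal NNReal Classical

set_option linter.unusedSectionVars false

variable {X : Type*} [MetricSpace X] [CompactSpace X] [MeasurableSpace X] [BorelSpace X]

/-! ### Auxiliary lemmas -/

lemma wt_continuous (T : X → X) (hT : Continuous T) (ℰ : ProbabilityMeasure X → ℝ)
    (hE : Continuous ℰ) {n : ℕ} (hn : n ≠ 0) : Continuous (wt T ℰ n) := by
  have hemp : Continuous fun x => empPM T n x := by
    rw [continuous_iff_continuousAt]
    intro x₀
    rw [ContinuousAt, ProbabilityMeasure.tendsto_iff_forall_integral_tendsto]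
    intro f
    have key : ∀ x : X, (∫ ω, f ω ∂(empPM T n x : Measure X)) =
        (n : ℝ)⁻¹ * ∑ i ∈ Finset.range n, f (T^[i] x) := by
      intro x
      have h1 : (empPM T n x : Measure X) = empMeas T n x := by simp [empPM, hn]
      rw [h1, empMeas, integral_smul_measure, integral_finset_sum_measure
        (fun i _ => f.integrable _)]
      simp [integral_dirac, smul_eq_mul]
    simp_rw [key]
    exact ((continuous_const.mul (continuous_finset_sum _ fun i _ =>
      f.continuous.comp (hT.iterate i))).tendsto x₀)
  exact Real.continuous_exp.comp (continuous_const.mul (hE.comp hemp))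

/-- The Bowen ball `B_n(x, ε)`. -/
def bow (T : X → X) (n : ℕ) (ε : ℝ) (x : X) : Set X :=
  {y | ∀ i < n, dist (T^[i] x) (T^[i] y) < ε}

lemma mem_bow_self (T : X → X) (n : ℕ) {ε : ℝ} (hε : 0 < ε) (x : X) :
    x ∈ bow T n ε x := fun i _ => by simpa using hε

lemma not_mem_bow {T : X → X} {n : ℕ} {ε : ℝ} {x y : X} (h : y ∉ bow T n ε x) :
    ∃ i < n, ε ≤ dist (T^[i] x) (T^[i] y) := by
  simpa [bow, not_lt] using h

lemma join_open {T : X → X} (hT : Continuous T) {𝒰 : Finset (Set X)}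
    (h𝒰 : IsOpenCover 𝒰) {n : ℕ} : ∀ U ∈ joinF T 𝒰 n, IsOpen U := by
  intro U hU
  simp only [joinF, Finset.mem_image] at hU
  obtain ⟨u, hu, rfl⟩ := hU
  exact isOpen_iInter_of_finite fun i =>
    (h𝒰.1 _ (Fintype.mem_piFinset.mp hu i)).preimage (hT.iterate _)

lemma bow_subset_join {T : X → X} {𝒰 : Finset (Set X)} {δ : ℝ} (hδ : 0 < δ)
    (hleb : ∀ x : X, ∃ U ∈ 𝒰, Metric.ball x δ ⊆ U) {n : ℕ} (x : X) :
    ∃ U ∈ joinF T 𝒰 n, bow T n (δ / 2) x ⊆ U := by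
  choose u hu hball using fun i : Fin n => hleb (T^[(i : ℕ)] x)
  refine ⟨⋂ i : Fin n, T^[(i : ℕ)] ⁻¹' u i, ?_, ?_⟩
  · simp only [joinF, Finset.mem_image]
    exact ⟨u, Fintype.mem_piFinset.mpr hu, rfl⟩
  · intro y hy
    simp only [mem_iInter, mem_preimage]
    intro i
    apply hball i
    rw [Metric.mem_ball, dist_comm]
    exact lt_trans (hy i i.2) (by linarith)

/-- greedy construction of a separated set and a disjoint cover with
matching sums; consequently `p¹_n(T,ℰ;𝒰) ≤ P_n(T,ℰ,δ/2)`. -/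
theorem p1_le_Pn (T : X → X) (hT : Continuous T)
    (ℰ : ProbabilityMeasure X → ℝ) (hE : Continuous ℰ)
    (𝒰 : Finset (Set X)) (h𝒰 : IsOpenCover 𝒰)
    (δ : ℝ) (hδ : 0 < δ) (hleb : ∀ x : X, ∃ U ∈ 𝒰, Metric.ball x δ ⊆ U)
    (n : ℕ) (hn : 1 ≤ n) :
    (∃ (E : Finset X) (𝒱 : Finset (Set X)),
      IsSeparated T n (δ / 2) E ∧ IsBorelCover 𝒱 ∧ Refines 𝒱 (joinF T 𝒰 n) ∧
      (∀ V ∈ 𝒱, ∀ W ∈ 𝒱, V ≠ W → Disjoint V W) ∧ 𝒱.card = E.card ∧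
      ∑ V ∈ 𝒱, sSup (wt T ℰ n '' V) = ∑ x ∈ E, wt T ℰ n x) ∧
    p1 T ℰ 𝒰 n ≤ Pn T ℰ n (δ / 2) := by
  classical
  have hn0 : n ≠ 0 := by omega
  have hwt : Continuous (wt T ℰ n) := wt_continuous T hT ℰ hE hn0
  have hwtpos : ∀ x : X, 0 < wt T ℰ n x := fun x => Real.exp_pos _
  -- the greedy construction
  have greedy : ∀ (m : ℕ) (s : Finset (Set X)), s.card ≤ m → s ⊆ joinF T 𝒰 n →
      ∀ R : Set X, IsClosed R → (∀ x ∈ R, ∃ U ∈ s, bow T n (δ / 2) x ⊆ U) →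
      ∃ (E : Finset X) (V : X → Set X),
        ↑E ⊆ R ∧ IsSeparated T n (δ / 2) E ∧
        (∀ x ∈ E, x ∈ V x) ∧ (∀ x ∈ E, V x ⊆ R) ∧ (∀ x ∈ E, MeasurableSet (V x)) ∧
        (∀ x ∈ E, ∃ U ∈ joinF T 𝒰 n, V x ⊆ U) ∧
        (∀ x ∈ E, ∀ y ∈ V x, wt T ℰ n y ≤ wt T ℰ n x) ∧
        (∀ x ∈ E, ∀ y ∈ E, x ≠ y → Disjoint (V x) (V y)) ∧
        R ⊆ ⋃ x ∈ E, V x := by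
    intro m
    induction m with
    | zero =>
      intro s hcard hsub R hRclosed hcov
      have hRe : R = ∅ := by
        have hse : s = ∅ := Finset.card_eq_zero.mp (Nat.le_zero.mp hcard)
        subst hse
        ext x
        simp only [mem_empty_iff_false, iff_false]
        intro hx
        obtain ⟨U, hU, -⟩ := hcov x hx
        simp at hU
      subst hRe
      refine ⟨∅, fun _ => ∅, ?_, ?_, ?_, ?_, ?_, ?_, ?_, ?_, ?_⟩ <;> simp [IsSeparated]
    | succ m ih =>
      intro s hcard hsub R hRclosed hcov
      rcases R.eq_empty_or_nonempty with rfl | hRne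
      · refine ⟨∅, fun _ => ∅, ?_, ?_, ?_, ?_, ?_, ?_, ?_, ?_, ?_⟩ <;> simp [IsSeparated]
      obtain ⟨x₁, hx₁R, hmax⟩ := hRclosed.isCompact.exists_isMaxOn hRne hwt.continuousOn
      obtain ⟨U, hUs, hBU⟩ := hcov x₁ hx₁R
      have hx₁U : x₁ ∈ U := hBU (mem_bow_self T n (by linarith) x₁)
      have hUJ : U ∈ joinF T 𝒰 n := hsub hUs
      have hUopen : IsOpen U := join_open hT h𝒰 U hUJ
      have hR'closed : IsClosed (R ∩ Uᶜ) := hRclosed.inter hUopen.isClosed_compl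
      have hcov' : ∀ x ∈ R ∩ Uᶜ, ∃ U' ∈ s.erase U, bow T n (δ / 2) x ⊆ U' := by
        rintro x ⟨hxR, hxU⟩
        obtain ⟨U', hU', hBU'⟩ := hcov x hxR
        refine ⟨U', Finset.mem_erase.mpr ⟨?_, hU'⟩, hBU'⟩
        rintro rfl
        exact hxU (hBU' (mem_bow_self T n (by linarith) x))
      have hcard' : (s.erase U).card ≤ m := by
        have := Finset.card_erase_of_mem hUs
        omega
      obtain ⟨E', V', hE'R, hsep', hmem', hsubR', hmeas', href', hle', hdisj', hcover'⟩ :=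
        ih (s.erase U) hcard' ((Finset.erase_subset _ _).trans hsub) _ hR'closed hcov'
      have hx₁E' : x₁ ∉ E' := fun h => (hE'R h).2 hx₁U
      set V : X → Set X := fun x => if x = x₁ then U ∩ R else V' x with hV
      have hVx₁ : V x₁ = U ∩ R := if_pos rfl
      have hVne : ∀ x ∈ E', V x = V' x := fun x hx =>
        if_neg (by rintro rfl; exact hx₁E' hx)
      have hsepnew : ∀ y ∈ E', ∃ i < n, δ / 2 ≤ dist (T^[i] x₁) (T^[i] y) := by
        intro y hy
        have hyU : y ∉ U := (hE'R hy).2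
        exact not_mem_bow (fun h => hyU (hBU h))
      have hdUV : ∀ y ∈ E', Disjoint (U ∩ R) (V' y) := fun y hy =>
        Set.disjoint_left.mpr fun a ha ha' => ((hsubR' y hy) ha').2 ha.1
      refine ⟨insert x₁ E', V, ?_, ?_, ?_, ?_, ?_, ?_, ?_, ?_, ?_⟩
      · intro z hz
        rcases Finset.mem_insert.mp (by exact_mod_cast hz) with rfl | hz'
        · exact hx₁R
        · exact ((hE'R hz').1 : z ∈ R)
      · intro x hx y hy hxy
        rcases Finset.mem_insert.mp hx with rfl | hx' <;>
          rcases Finset.mem_insert.mp hy with rfl | hy'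
        · exact absurd rfl hxy
        · exact hsepnew y hy'
        · obtain ⟨i, hi, h⟩ := hsepnew x hx'
          exact ⟨i, hi, by rwa [dist_comm]⟩
        · exact hsep' x hx' y hy' hxy
      · intro x hx
        rcases Finset.mem_insert.mp hx with rfl | hx'
        · rw [hVx₁]; exact ⟨hx₁U, hx₁R⟩
        · rw [hVne x hx']; exact hmem' x hx'
      · intro x hx
        rcases Finset.mem_insert.mp hx with rfl | hx'
        · rw [hVx₁]; exact inter_subset_right
        · rw [hVne x hx']; exact (hsubR' x hx').trans inter_subset_left
      · intro x hx
        rcases Finset.mem_insert.mp hx with rfl | hx'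
        · rw [hVx₁]; exact hUopen.measurableSet.inter hRclosed.measurableSet
        · rw [hVne x hx']; exact hmeas' x hx'
      · intro x hx
        rcases Finset.mem_insert.mp hx with rfl | hx'
        · exact ⟨U, hUJ, hVx₁ ▸ inter_subset_left⟩
        · rw [hVne x hx']; exact href' x hx'
      · intro x hx y hy
        rcases Finset.mem_insert.mp hx with rfl | hx'
        · rw [hVx₁] at hy; exact hmax hy.2
        · rw [hVne x hx'] at hy; exact hle' x hx' y hy
      · intro x hx y hy hxy
        rcases Finset.mem_insert.mp hx with rfl | hx' <;>
          rcases Finset.mem_insert.mp hy with rfl | hy'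
        · exact absurd rfl hxy
        · rw [hVx₁, hVne y hy']; exact hdUV y hy'
        · rw [hVx₁, hVne x hx']; exact (hdUV x hx').symm
        · rw [hVne x hx', hVne y hy']; exact hdisj' x hx' y hy' hxy
      · intro z hz
        by_cases hzU : z ∈ U
        · refine Set.mem_biUnion (Finset.mem_insert_self x₁ E') ?_
          rw [hVx₁]; exact ⟨hzU, hz⟩
        · obtain ⟨y, hy, hzy⟩ := Set.mem_iUnion₂.mp (hcover' ⟨hz, hzU⟩)
          exact Set.mem_biUnion (Finset.mem_insert_of_mem hy) ((hVne y hy).symm ▸ hzy)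
  -- apply the greedy lemma
  obtain ⟨E, V, -, hsep, hmem, -, hmeas, href, hle, hdisj, hcover⟩ :=
    greedy (joinF T 𝒰 n).card (joinF T 𝒰 n) le_rfl (subset_refl _) univ isClosed_univ
      (fun x _ => bow_subset_join hδ hleb x)
  have hinj : Set.InjOn V ↑E := by
    intro x hx y hy hVxy
    by_contra hne
    have h1 : x ∈ V x := hmem x hx
    have h2 : x ∈ V y := hVxy ▸ h1
    exact (Set.disjoint_left.mp (hdisj x hx y hy hne) h1) h2
  have hsSup : ∀ x ∈ E, sSup (wt T ℰ n '' V x) = wt T ℰ n x := by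
    intro x hx
    apply le_antisymm
    · apply Real.sSup_le
      · rintro r ⟨y, hy, rfl⟩
        exact hle x hx y hy
      · exact (hwtpos x).le
    · exact le_csSup ⟨wt T ℰ n x, by rintro r ⟨y, hy, rfl⟩; exact hle x hx y hy⟩
        (mem_image_of_mem _ (hmem x hx))
  have hVcover : ⋃₀ ((E.image V : Finset (Set X)) : Set (Set X)) = univ := by
    apply eq_univ_of_univ_subset
    intro z hz
    obtain ⟨y, hy, hzy⟩ := Set.mem_iUnion₂.mp (hcover hz)
    exact ⟨V y, Finset.mem_coe.mpr (Finset.mem_image_of_mem V hy), hzy⟩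
  have hsum : ∑ W ∈ E.image V, sSup (wt T ℰ n '' W) = ∑ x ∈ E, wt T ℰ n x := by
    rw [Finset.sum_image (fun x hx y hy h => hinj hx hy h)]
    exact Finset.sum_congr rfl hsSup
  have hBorel : IsBorelCover (E.image V) := by
    refine ⟨?_, hVcover⟩
    intro W hW
    obtain ⟨x, hx, rfl⟩ := Finset.mem_image.mp hW
    exact hmeas x hx
  have hRef : Refines (E.image V) (joinF T 𝒰 n) := by
    intro W hW
    obtain ⟨x, hx, rfl⟩ := Finset.mem_image.mp hW
    exact href x hx
  have hDisj : ∀ W₁ ∈ E.image V, ∀ W₂ ∈ E.image V, W₁ ≠ W₂ → Disjoint W₁ W₂ := by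
    intro W₁ hW₁ W₂ hW₂ hne
    obtain ⟨x, hx, rfl⟩ := Finset.mem_image.mp hW₁
    obtain ⟨y, hy, rfl⟩ := Finset.mem_image.mp hW₂
    exact hdisj x hx y hy (fun h => hne (h ▸ rfl))
  have hcardeq : (E.image V).card = E.card := Finset.card_image_of_injOn hinj
  refine ⟨⟨E, E.image V, hsep, hBorel, hRef, hDisj, hcardeq, hsum⟩, ?_⟩
  -- p1 ≤ Pn
  have hp1 : p1 T ℰ 𝒰 n ≤ ∑ x ∈ E, wt T ℰ n x := by
    rw [← hsum]
    apply csInf_le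
    · refine ⟨0, ?_⟩
      rintro r ⟨𝒱, -, -, rfl⟩
      exact Finset.sum_nonneg fun W _ => Real.sSup_nonneg fun t ht => by
        obtain ⟨y, -, rfl⟩ := ht; exact (hwtpos y).le
    · exact ⟨E.image V, hBorel, hRef, rfl⟩
  refine hp1.trans ?_
  have hmemPn : (∑ x ∈ E, wt T ℰ n x) ∈
      {r | ∃ E : Finset X, IsSeparated T n (δ / 2) E ∧ r = ∑ x ∈ E, wt T ℰ n x} :=
    ⟨E, hsep, rfl⟩
  refine le_csSup ?_ hmemPn
  -- boundedness of the Pn set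
  rcases isEmpty_or_nonempty X with hX | hX
  · refine ⟨0, ?_⟩
    rintro r ⟨F, -, rfl⟩
    rw [Finset.eq_empty_of_isEmpty F]
    simp
  -- uniform bound on wt
  obtain ⟨c, -, hc⟩ := isCompact_univ.exists_isMaxOn univ_nonempty hwt.continuousOn
  -- finite subcover by quarter Bowen balls
  have hq : ∀ z : X, IsOpen (bow T n (δ / 4) z) := by
    intro z
    have heq : bow T n (δ / 4) z
        = ⋂ i : Fin n, T^[(i : ℕ)] ⁻¹' Metric.ball (T^[(i : ℕ)] z) (δ / 4) := by
      ext y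
      simp only [bow, mem_setOf_eq, mem_iInter, mem_preimage, Metric.mem_ball]
      constructor
      · intro h i
        rw [dist_comm]
        exact h i i.2
      · intro h i hi
        rw [dist_comm]
        exact h ⟨i, hi⟩
    rw [heq]
    exact isOpen_iInter_of_finite fun i => Metric.isOpen_ball.preimage (hT.iterate _)
  obtain ⟨t, ht⟩ := isCompact_univ.elim_finite_subcover (fun z : X => bow T n (δ / 4) z)
    hq (fun z _ => Set.mem_iUnion.mpr ⟨z, mem_bow_self T n (by linarith) z⟩)
  refine ⟨(t.card : ℝ) * wt T ℰ n c, ?_⟩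
  rintro r ⟨F, hFsep, rfl⟩
  have hchoose : ∀ x : X, ∃ z ∈ t, x ∈ bow T n (δ / 4) z := by
    intro x
    have hx := ht (mem_univ x)
    simpa using hx
  choose g hg1 hg2 using hchoose
  have hginj : Set.InjOn g ↑F := by
    intro x hx y hy hgxy
    by_contra hne
    obtain ⟨i, hi, hd⟩ := hFsep x (by exact_mod_cast hx) y (by exact_mod_cast hy) hne
    have h1 : dist (T^[i] (g x)) (T^[i] x) < δ / 4 := hg2 x i hi
    have h2 : dist (T^[i] (g y)) (T^[i] y) < δ / 4 := hg2 y i hi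
    rw [hgxy] at h1
    have hlt : dist (T^[i] x) (T^[i] y) < δ / 2 := by
      calc dist (T^[i] x) (T^[i] y)
          ≤ dist (T^[i] x) (T^[i] (g y)) + dist (T^[i] (g y)) (T^[i] y) := dist_triangle _ _ _
        _ < δ / 4 + δ / 4 := by rw [dist_comm] at h1; exact add_lt_add h1 h2
        _ = δ / 2 := by ring
    linarith
  have hcardF : F.card ≤ t.card :=
    Finset.card_le_card_of_injOn g (fun x _ => hg1 x) hginj
  calc ∑ x ∈ F, wt T ℰ n x ≤ ∑ _x ∈ F, wt T ℰ n c :=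
        Finset.sum_le_sum fun x _ => hc (mem_univ x)
    _ = (F.card : ℝ) * wt T ℰ n c := by rw [Finset.sum_const, nsmul_eq_mul]
    _ ≤ (t.card : ℝ) * wt T ℰ n c := by
        apply mul_le_mul_of_nonneg_right _ (hwtpos c).le
        exact_mod_cast hcardF
end

section
/- Let (X,T) be a topological dynamical system, ℰ an energy, 𝒰 a finite open cover, and {α_l}_{l≥1} a sequence of finite Borel partitions of X each refining 𝒰. Then for every n ≥ 1 there exists a finite set B_n ⊆ X such that (a) for each 1 ≤ l ≤ n, every atom of (α_l)_0^{n-1} = ⋁_{i=0}^{n-1}T^{-i}α_l contains at most one point of B_n, and (b) ∑_{x∈B_n} e^{nℰ(Δ_x^n)} ≥ (1/(2n)) · p_n(T,ℰ;𝒰). -/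
open MeasureTheory Filter Set
open scoped ENNReal NNReal Classical

set_option linter.unusedSectionVars false

variable {X : Type*} [MetricSpace X] [CompactSpace X] [MeasurableSpace X] [BorelSpace X]

/-! While some part `S` of `X` is left, pick `x ∈ S` whose weight is at least half the
supremum of the weight on `S`, and remove from `S` the atoms of all the partitions
`(α_l)_0^{n-1}`, `1 ≤ l ≤ n`, that contain `x`. Each of these `n` atoms, intersected with `S`,
has weight supremum at most `2 wt x`, so the removed pieces form a Borel cover refining
`𝒰_0^{n-1}` of cost at most `2n ∑_{x ∈ B} wt x`. The process stops because every step removes an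
atom of `(α_1)_0^{n-1}`, and the chosen points lie in distinct atoms because each new point is
taken outside the atoms of the earlier ones. -/

section Partitions

variable {Y : Type*}

theorem Refines.joinF {α 𝒰 : Finset (Set Y)} (h : Refines α 𝒰) (T : Y → Y) (n : ℕ) :
    Refines (joinF T α n) (joinF T 𝒰 n) := by
  simp only [Refines, _root_.joinF, Finset.mem_image, Fintype.mem_piFinset]
  rintro _ ⟨u, hu, rfl⟩
  choose w hw huw using fun i => h (u i) (hu i)
  exact ⟨_, ⟨w, hw, rfl⟩, iInter_mono fun i => preimage_mono (huw i)⟩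

variable [MeasurableSpace Y] {α : Finset (Set Y)}

theorem IsPartitionF.exists_mem (hα : IsPartitionF α) (x : Y) : ∃ A ∈ α, x ∈ A := by
  simpa using hα.2.1.ge (mem_univ x)

theorem IsPartitionF.eq_of_mem (hα : IsPartitionF α) {A B : Set Y} (hA : A ∈ α) (hB : B ∈ α)
    {x : Y} (hxA : x ∈ A) (hxB : x ∈ B) : A = B := by
  by_contra hAB
  exact disjoint_left.1 (hα.2.2 A hA B hB hAB) hxA hxB

theorem IsPartitionF.joinF (hα : IsPartitionF α) {T : Y → Y} (hT : Measurable T) (n : ℕ) :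
    IsPartitionF (joinF T α n) := by
  refine ⟨?_, eq_univ_of_forall fun x => ?_, ?_⟩
  · simp only [_root_.joinF, Finset.mem_image, Fintype.mem_piFinset]
    rintro _ ⟨u, hu, rfl⟩
    exact .iInter fun i => hT.iterate i (hα.1 _ (hu i))
  · choose u hu hxu using fun i : Fin n => hα.exists_mem (T^[i] x)
    exact ⟨_, Finset.mem_image_of_mem _ (Fintype.mem_piFinset.2 hu), mem_iInter.2 hxu⟩
  · simp only [_root_.joinF, Finset.mem_image, Fintype.mem_piFinset]
    rintro _ ⟨u, hu, rfl⟩ _ ⟨v, hv, rfl⟩ huv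
    obtain ⟨i, hi⟩ : ∃ i, u i ≠ v i := by
      by_contra! h
      exact huv (by rw [funext h])
    exact ((hα.2.2 _ (hu i) _ (hv i) hi).preimage _).mono (iInter_subset _ i) (iInter_subset _ i)

theorem IsPartitionF.subsingleton_insert_inter (hα : IsPartitionF α) {A₀ : Set Y} (hA₀ : A₀ ∈ α)
    {x : Y} (hxA₀ : x ∈ A₀) {B : Set Y} (hBA₀ : B ∩ A₀ = ∅)
    (hB : ∀ A ∈ α, (B ∩ A).Subsingleton) {A : Set Y} (hA : A ∈ α) :
    (insert x B ∩ A).Subsingleton := by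
  by_cases hxA : x ∈ A
  · obtain rfl := hα.eq_of_mem hA₀ hA hxA₀ hxA
    rw [insert_inter_of_mem hxA, hBA₀, insert_empty_eq]
    exact subsingleton_singleton
  · rw [insert_inter_of_notMem hxA]
    exact hB A hA

end Partitions

theorem exists_sSup_image_le_two_mul {Y : Type*} {w : Y → ℝ} (hw : ∀ x, 0 ≤ w x) {S : Set Y}
    (hS : S.Nonempty) : ∃ x ∈ S, sSup (w '' S) ≤ 2 * w x := by
  by_cases hpos : 0 < sSup (w '' S)
  · obtain ⟨_, ⟨x, hx, rfl⟩, hlt⟩ := exists_lt_of_lt_csSup (hS.image w) (half_lt_self hpos)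
    exact ⟨x, hx, by linarith⟩
  · obtain ⟨y, hy⟩ := hS
    exact ⟨y, hy, by linarith [hw y]⟩

section Greedy

variable {Y ι : Type*} [MeasurableSpace Y] (L : Finset ι) (P : ι → Finset (Set Y)) (w : Y → ℝ)

def IsGreedySelection (S : Set Y) (B : Finset Y) : Prop :=
  ↑B ⊆ S ∧ (∀ l ∈ L, ∀ A ∈ P l, (↑B ∩ A).Subsingleton) ∧
    ∃ 𝒱 : Finset (Set Y), (∀ V ∈ 𝒱, MeasurableSet V ∧ ∃ l ∈ L, ∃ A ∈ P l, V ⊆ A) ∧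
      S ⊆ ⋃₀ ↑𝒱 ∧ ∑ V ∈ 𝒱, sSup (w '' V) ≤ 2 * L.card * ∑ x ∈ B, w x

variable {L P w}

theorem isGreedySelection_empty : IsGreedySelection L P w ∅ ∅ :=
  ⟨by simp, by simp, ∅, by simp, empty_subset _, by simp⟩

theorem sum_sSup_image_union_image_le (hw : ∀ x, 0 ≤ w x) (hbdd : BddAbove (range w))
    (𝒱 : Finset (Set Y)) {S : Set Y} {x : Y}
    (hx : sSup (w '' S) ≤ 2 * w x) {A : ι → Set Y} (hxA : ∀ l ∈ L, x ∈ A l) (hxS : x ∈ S) :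
    ∑ V ∈ 𝒱 ∪ L.image (fun l => A l ∩ S), sSup (w '' V) ≤
      ∑ V ∈ 𝒱, sSup (w '' V) + 2 * L.card * w x := by
  have hsSup_nonneg : ∀ V : Set Y, 0 ≤ sSup (w '' V) := fun V =>
    Real.sSup_nonneg (by rintro _ ⟨y, -, rfl⟩; exact hw y)
  calc ∑ V ∈ 𝒱 ∪ L.image (fun l => A l ∩ S), sSup (w '' V)
      ≤ ∑ V ∈ 𝒱, sSup (w '' V) + ∑ V ∈ L.image (fun l => A l ∩ S), sSup (w '' V) := by
        rw [← Finset.sum_union_inter]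
        exact le_add_of_nonneg_right (Finset.sum_nonneg fun V _ => hsSup_nonneg V)
    _ ≤ ∑ V ∈ 𝒱, sSup (w '' V) + ∑ l ∈ L, sSup (w '' (A l ∩ S)) := by
        gcongr
        exact Finset.sum_image_le_of_nonneg fun V _ => hsSup_nonneg V
    _ ≤ ∑ V ∈ 𝒱, sSup (w '' V) + ∑ l ∈ L, 2 * w x := by
        gcongr with l hl
        refine (csSup_le_csSup (hbdd.mono (image_subset_range _ _)) ?_
          (image_mono inter_subset_right)).trans hx
        exact ⟨w x, mem_image_of_mem w ⟨hxA l hl, hxS⟩⟩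
    _ = ∑ V ∈ 𝒱, sSup (w '' V) + 2 * L.card * w x := by
        rw [Finset.sum_const, nsmul_eq_mul]
        ring

theorem isGreedySelection_insert (hP : ∀ l ∈ L, IsPartitionF (P l)) (hw : ∀ x, 0 ≤ w x)
    (hbdd : BddAbove (range w)) (hL : L.Nonempty) {S : Set Y} (hS : MeasurableSet S) {x : Y}
    (hxS : x ∈ S) (hx : sSup (w '' S) ≤ 2 * w x) {A : ι → Set Y} (hA : ∀ l ∈ L, A l ∈ P l)
    (hxA : ∀ l ∈ L, x ∈ A l) {B : Finset Y}
    (hB : IsGreedySelection L P w (S \ ⋃ l ∈ L, A l) B) :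
    IsGreedySelection L P w S (insert x B) := by
  obtain ⟨hBS, hsep, 𝒱, h𝒱, hcov, hsum⟩ := hB
  have hBA : ∀ l ∈ L, ↑B ∩ A l = ∅ := fun l hl =>
    eq_empty_of_forall_notMem fun y hy => (hBS hy.1).2 (mem_biUnion hl hy.2)
  have hxB : x ∉ B := fun h => by
    obtain ⟨l, hl⟩ := hL
    exact (hBA l hl).subset ⟨h, hxA l hl⟩
  refine ⟨?_, ?_, 𝒱 ∪ L.image (fun l => A l ∩ S), ?_, ?_, ?_⟩
  · rw [Finset.coe_insert]
    exact insert_subset hxS (hBS.trans sdiff_subset)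
  · intro l hl A' hA'
    rw [Finset.coe_insert]
    exact (hP l hl).subsingleton_insert_inter (hA l hl) (hxA l hl) (hBA l hl) (hsep l hl) hA'
  · simp only [Finset.mem_union, Finset.mem_image]
    rintro V (hV | ⟨l, hl, rfl⟩)
    · exact h𝒱 V hV
    · exact ⟨((hP l hl).1 _ (hA l hl)).inter hS, l, hl, A l, hA l hl, inter_subset_left⟩
  · intro y hy
    by_cases hyA : y ∈ ⋃ l ∈ L, A l
    · obtain ⟨l, hl, hyl⟩ := mem_iUnion₂.1 hyA
      exact ⟨A l ∩ S, by simp only [Finset.coe_union, Finset.coe_image]; exact .inr ⟨l, hl, rfl⟩,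
        hyl, hy⟩
    · obtain ⟨V, hV, hyV⟩ := hcov ⟨hy, hyA⟩
      exact ⟨V, by simp [hV], hyV⟩
  · calc _ ≤ ∑ V ∈ 𝒱, sSup (w '' V) + 2 * L.card * w x :=
          sum_sSup_image_union_image_le hw hbdd 𝒱 hx hxA hxS
      _ ≤ 2 * L.card * ∑ y ∈ insert x B, w y := by
          rw [Finset.sum_insert hxB]
          linarith

theorem exists_isGreedySelection (hP : ∀ l ∈ L, IsPartitionF (P l)) (hw : ∀ x, 0 ≤ w x)
    (hbdd : BddAbove (range w)) {l₀ : ι} (hl₀ : l₀ ∈ L) (𝒜 : Finset (Set Y)) (h𝒜 : 𝒜 ⊆ P l₀)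
    (S : Set Y) (hS : MeasurableSet S) (hS𝒜 : S ⊆ ⋃₀ ↑𝒜) : ∃ B, IsGreedySelection L P w S B := by
  induction 𝒜 using Finset.strongInduction generalizing S with
  | H 𝒜 ih =>
  rcases S.eq_empty_or_nonempty with rfl | hSne
  · exact ⟨∅, isGreedySelection_empty⟩
  obtain ⟨x, hxS, hx⟩ := exists_sSup_image_le_two_mul hw hSne
  choose! A hA hxA using fun l (hl : l ∈ L) => (hP l hl).exists_mem x
  obtain ⟨A₀, hA₀, hxA₀⟩ := hS𝒜 hxS
  have hA₀_eq : A₀ = A l₀ := (hP l₀ hl₀).eq_of_mem (h𝒜 hA₀) (hA l₀ hl₀) hxA₀ (hxA l₀ hl₀)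
  have hN : MeasurableSet (⋃ l ∈ L, A l) :=
    Finset.measurableSet_biUnion L fun l hl => (hP l hl).1 _ (hA l hl)
  have hcov : S \ ⋃ l ∈ L, A l ⊆ ⋃₀ ↑(𝒜.erase A₀) := by
    rintro y ⟨hyS, hyN⟩
    obtain ⟨A', hA', hyA'⟩ := hS𝒜 hyS
    refine ⟨A', Finset.mem_erase.2 ⟨?_, hA'⟩, hyA'⟩
    rintro rfl
    exact hyN (mem_biUnion hl₀ (hA₀_eq ▸ hyA'))
  obtain ⟨B, hB⟩ := ih _ (Finset.erase_ssubset hA₀) ((Finset.erase_subset _ _).trans h𝒜) _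
    (hS.diff hN) hcov
  exact ⟨insert x B, isGreedySelection_insert hP hw hbdd ⟨l₀, hl₀⟩ hS hxS hx hA hxA hB⟩

end Greedy

open scoped BoundedContinuousFunction

theorem coe_empPM (T : X → X) {n : ℕ} (hn : n ≠ 0) (y : X) :
    (empPM T n y : Measure X) = empMeas T n y := by
  simp [empPM, hn]

theorem lintegral_empPM (T : X → X) {n : ℕ} (hn : n ≠ 0) (f : X →ᵇ ℝ≥0) (y : X) :
    ∫⁻ ω, f ω ∂(empPM T n y : Measure X) =
      (n : ℝ≥0∞)⁻¹ * ∑ i ∈ Finset.range n, (f (T^[i] y) : ℝ≥0∞) := by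
  rw [coe_empPM T hn, empMeas, lintegral_smul_measure, lintegral_finsetSum_measure]
  simp_rw [lintegral_dirac]
  rfl

theorem continuous_empPM {T : X → X} (hT : Continuous T) {n : ℕ} (hn : n ≠ 0) :
    Continuous (empPM T n) := by
  refine continuous_iff_continuousAt.2 fun x =>
    ProbabilityMeasure.tendsto_iff_forall_lintegral_tendsto.2 fun f => ?_
  simp only [lintegral_empPM T hn]
  have := ENNReal.continuous_const_mul (ENNReal.inv_ne_top.2 (Nat.cast_ne_zero.2 hn))
  exact (this.comp (continuous_finsetSum _ fun i _ =>
    ENNReal.continuous_coe.comp (f.continuous.comp (hT.iterate i)))).tendsto x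

theorem continuous_wt {T : X → X} (hT : Continuous T) {ℰ : ProbabilityMeasure X → ℝ}
    (hE : Continuous ℰ) {n : ℕ} (hn : n ≠ 0) : Continuous (wt T ℰ n) :=
  Real.continuous_exp.comp (continuous_const.mul (hE.comp (continuous_empPM hT hn)))

theorem p1_le_sum {T : X → X} {ℰ : ProbabilityMeasure X → ℝ} {𝒰 𝒱 : Finset (Set X)} {n : ℕ}
    (h𝒱 : IsBorelCover 𝒱) (href : Refines 𝒱 (joinF T 𝒰 n)) :
    p1 T ℰ 𝒰 n ≤ ∑ V ∈ 𝒱, sSup (wt T ℰ n '' V) := by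
  refine csInf_le ⟨0, ?_⟩ ⟨𝒱, h𝒱, href, rfl⟩
  rintro _ ⟨𝒲, -, -, rfl⟩
  exact Finset.sum_nonneg fun V _ =>
    Real.sSup_nonneg (by rintro _ ⟨y, -, rfl⟩; exact (Real.exp_pos _).le)

theorem exists_greedy_set_general (T : X → X) (hT : Continuous T)
    (ℰ : ProbabilityMeasure X → ℝ) (hE : Continuous ℰ)
    (𝒰 : Finset (Set X))
    (α : ℕ → Finset (Set X))
    (hα : ∀ l : ℕ, 1 ≤ l → IsPartitionF (α l) ∧ Refines (α l) 𝒰)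
    (n : ℕ) (hn : 1 ≤ n) :
    ∃ B : Finset X,
      (∀ l : ℕ, 1 ≤ l → l ≤ n → ∀ A ∈ joinF T (α l) n, ((B : Set X) ∩ A).Subsingleton) ∧
      (1 / (2 * n) : ℝ) * p1 T ℰ 𝒰 n ≤ ∑ x ∈ B, wt T ℰ n x := by
  have hpart : ∀ l ∈ Finset.Icc 1 n, IsPartitionF (joinF T (α l) n) := fun l hl =>
    (hα l (Finset.mem_Icc.1 hl).1).1.joinF hT.measurable n
  have h1 : 1 ∈ Finset.Icc 1 n := Finset.mem_Icc.2 ⟨le_rfl, hn⟩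
  have hbdd : BddAbove (range (wt T ℰ n)) :=
    (isCompact_range (continuous_wt hT hE (n := n) (by omega))).bddAbove
  obtain ⟨B, -, hsep, 𝒱, h𝒱, hcov, hsum⟩ := exists_isGreedySelection hpart
    (fun x => (Real.exp_pos _).le) hbdd h1 _ subset_rfl univ .univ (hpart 1 h1).2.1.ge
  refine ⟨B, fun l hl1 hln => hsep l (Finset.mem_Icc.2 ⟨hl1, hln⟩), ?_⟩
  have hrefines : Refines 𝒱 (joinF T 𝒰 n) := fun V hV => by
    obtain ⟨-, l, hl, A, hA, hVA⟩ := h𝒱 V hV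
    obtain ⟨W, hW, hAW⟩ := (hα l (Finset.mem_Icc.1 hl).1).2.joinF T n A hA
    exact ⟨W, hW, hVA.trans hAW⟩
  have hp1 := (p1_le_sum ⟨fun V hV => (h𝒱 V hV).1, univ_subset_iff.1 hcov⟩ hrefines).trans hsum
  rw [Nat.card_Icc, Nat.add_sub_cancel] at hp1
  rw [one_div, inv_mul_le_iff₀ (by positivity)]
  exact hp1

/-- greedy selection of points, one per atom of each `(α_l)_0^{n-1}`,
carrying at least `1/(2n)` of `p_n(T,ℰ;𝒰)`. -/
theorem exists_greedy_set (T : X → X) (hT : Continuous T)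
    (ℰ : ProbabilityMeasure X → ℝ) (hE : Continuous ℰ)
    (𝒰 : Finset (Set X)) (h𝒰 : IsOpenCover 𝒰)
    (α : ℕ → Finset (Set X))
    (hα : ∀ l : ℕ, 1 ≤ l → IsPartitionF (α l) ∧ Refines (α l) 𝒰)
    (n : ℕ) (hn : 1 ≤ n) :
    ∃ B : Finset X,
      (∀ l : ℕ, 1 ≤ l → l ≤ n → ∀ A ∈ joinF T (α l) n, ((B : Set X) ∩ A).Subsingleton) ∧
      (1 / (2 * n) : ℝ) * p1 T ℰ 𝒰 n ≤ ∑ x ∈ B, wt T ℰ n x :=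
  exists_greedy_set_general T hT ℰ hE 𝒰 α hα n hn
end
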